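/- (Main theorem) Let μ be a translation-invariant probability measure on Ω = S^(ℤ^d) satisfying GCB(C) for some C > 0, and assume bounded local functions are measure-separating. Then for every translation-invariant probability measure μ' ≠ μ, the lower relative entropy density s_*(μ'|μ) is strictly positive. -/

import Mathlib

open MeasureTheory ENNReal Filter Topology

/-- Configuration space Ω = S^(ℤ^d). -/
abbrev Config (S : Type*) (d : ℕ) := (Fin d → ℤ) → S

/-- Single-site oscillation δ_i f, valued in [0,∞]. -/
noncomputable def osc {S : Type*} {d : ℕ} (f : Config S d → ℝ) (i : Fin d → ℤ) : ℝ≥0∞ :=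
  ⨆ (σ : Config S d) (η : Config S d) (_ : ∀ j, j ≠ i → σ j = η j),
    ENNReal.ofReal (f σ - f η)

/-- Translation of a configuration: (τ_i σ)_j = σ_{j-i}. -/
def shift {S : Type*} {d : ℕ} (i : Fin d → ℤ) (σ : Config S d) : Config S d :=
  fun j => σ (j - i)

/-- f is bounded. -/
def IsBoundedFn {S : Type*} {d : ℕ} (f : Config S d → ℝ) : Prop :=
  ∃ M : ℝ, ∀ σ, |f σ| ≤ M

/-- f is local: it depends only on the coordinates in some finite set Λ. -/
def IsLocalFn {S : Type*} {d : ℕ} (f : Config S d → ℝ) : Prop :=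
  ∃ Λ : Finset (Fin d → ℤ), ∀ σ η : Config S d, (∀ i ∈ Λ, σ i = η i) → f σ = f η

/-- The configuration equal to η on Λ and to ξ off Λ. -/
def patch {S : Type*} {d : ℕ} (Λ : Finset (Fin d → ℤ)) (η ξ : Config S d) : Config S d :=
  fun j => if j ∈ Λ then η j else ξ j

/-- Gaussian concentration bound GCB(C) for all bounded local measurable functions. -/
def GCB {S : Type*} {d : ℕ} [MeasurableSpace S] (C : ℝ)
    (μ : Measure (Config S d)) : Prop :=
  ∀ f : Config S d → ℝ, Measurable f → IsBoundedFn f → IsLocalFn f →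
    ∫ x, Real.exp (f x - ∫ y, f y ∂μ) ∂μ ≤
      Real.exp (C / 2 * (∑' i, (osc f i) ^ 2).toReal)

/-- Translation invariance of a measure. -/
def TransInv {S : Type*} {d : ℕ} [MeasurableSpace S] (μ : Measure (Config S d)) : Prop :=
  ∀ i : Fin d → ℤ, μ.map (shift i) = μ

open Classical in
/-- Relative entropy of μ' w.r.t. μ. -/
noncomputable def relEnt {α : Type*} [MeasurableSpace α] (μ' μ : Measure α) : ℝ≥0∞ :=
  if μ' ≪ μ ∧ Integrable (llr μ' μ) μ' then ENNReal.ofReal (∫ x, llr μ' μ x ∂μ') else ⊤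

/-- The cube Λ_n = [-n,n]^d ∩ ℤ^d. -/
noncomputable def cube (d n : ℕ) : Finset (Fin d → ℤ) :=
  Fintype.piFinset fun _ : Fin d => Finset.Icc (-(n : ℤ)) (n : ℤ)

/-- Projection onto the coordinates in Λ. -/
def proj {S : Type*} {d : ℕ} (Λ : Finset (Fin d → ℤ)) (σ : Config S d) : Λ → S :=
  fun i => σ i

/-- Relative entropy of the marginals on Λ. -/
noncomputable def relEntΛ {S : Type*} {d : ℕ} [MeasurableSpace S]
    (Λ : Finset (Fin d → ℤ)) (μ' μ : Measure (Config S d)) : ℝ≥0∞ :=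
  relEnt (μ'.map (proj Λ)) (μ.map (proj Λ))

/-- Lower relative entropy density s_*(μ'|μ). -/
noncomputable def entDensity {S : Type*} {d : ℕ} [MeasurableSpace S]
    (μ' μ : Measure (Config S d)) : ℝ≥0∞ :=
  Filter.atTop.liminf fun n : ℕ => relEntΛ (cube d n) μ' μ / (cube d n).card

/-!
Take a bounded local `f` with `Δ = μ'(f) - μ(f) ≠ 0`, localized in the cube `Λ_r`. The block
sum `F_n = ∑_{k ∈ Λ_n} f ∘ τ_k` is localized in `Λ_{n+r}`, each of its single-site oscillations
is at most `A = ∑_j δ_j f ≤ 2 ‖f‖_∞ |Λ_r|`, and translation invariance gives `μ'(F_n) - μ(F_n) = |Λ_n| Δ`.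
Applying GCB to `t F_n` and the Donsker–Varadhan inequality to the marginals on `Λ_{n+r}`, and
optimizing in `t`, gives `s_{Λ_{n+r}}(μ'|μ) ≥ (|Λ_n| Δ)² / (2 C |Λ_{n+r}| A²)`. Since
`|Λ_{n+r}| ≤ |Λ_n| |Λ_r|`, this is at least a fixed positive multiple of `|Λ_{n+r}|`.
-/

section Entropy
variable {α : Type*} [MeasurableSpace α]

lemma integrable_of_abs_le {ν : Measure α} [IsFiniteMeasure ν] {f : α → ℝ} (hf : Measurable f)
    {M : ℝ} (hM : ∀ x, |f x| ≤ M) : Integrable f ν :=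
  .of_bound hf.aestronglyMeasurable M (ae_of_all _ hM)

lemma integrable_exp_const_mul_of_abs_le {ν : Measure α} [IsFiniteMeasure ν] {f : α → ℝ}
    (hf : Measurable f) {M : ℝ} (hM : ∀ x, |f x| ≤ M) (t : ℝ) :
    Integrable (fun x => Real.exp (t * f x)) ν :=
  integrable_of_abs_le (by fun_prop) fun x => by
    rw [Real.abs_exp]
    exact Real.exp_le_exp.2 ((le_abs_self _).trans (by
      rw [abs_mul]; exact mul_le_mul_of_nonneg_left (hM x) (abs_nonneg t)))

/-- The Donsker–Varadhan variational inequality. -/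
lemma integral_sub_log_integral_exp_le_relEnt {ν' ν : Measure α} [IsProbabilityMeasure ν']
    [IsProbabilityMeasure ν] {g : α → ℝ} (hg : Integrable g ν')
    (hexp : Integrable (fun x => Real.exp (g x)) ν) :
    ENNReal.ofReal (∫ x, g x ∂ν' - Real.log (∫ x, Real.exp (g x) ∂ν)) ≤ relEnt ν' ν := by
  by_cases h : ν' ≪ ν ∧ Integrable (llr ν' ν) ν'
  · obtain ⟨hac, hint⟩ := h
    have : IsProbabilityMeasure (ν.tilted g) := isProbabilityMeasure_tilted hexp
    have hnonneg := InformationTheory.integral_llr_add_sub_measure_univ_nonneg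
      (hac.trans (absolutelyContinuous_tilted hexp)) (integrable_llr_tilted_right hac hg hint hexp)
    rw [integral_llr_tilted_right hac hg hexp hint] at hnonneg
    rw [relEnt, if_pos ⟨hac, hint⟩]
    refine ENNReal.ofReal_le_ofReal ?_
    simp only [probReal_univ] at hnonneg
    linarith
  · rw [relEnt, if_neg h]
    exact le_top

lemma sq_integral_sub_div_le_relEnt {ν' ν : Measure α} [IsProbabilityMeasure ν']
    [IsProbabilityMeasure ν] {g : α → ℝ} {V : ℝ} (hV : 0 < V) (hg : Integrable g ν')
    (hexp : ∀ t : ℝ, Integrable (fun x => Real.exp (t * g x)) ν)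
    (hsub : ∀ t : ℝ, ∫ x, Real.exp (t * g x - ∫ y, t * g y ∂ν) ∂ν ≤ Real.exp (t ^ 2 * V / 2)) :
    ENNReal.ofReal ((∫ x, g x ∂ν' - ∫ x, g x ∂ν) ^ 2 / (2 * V)) ≤ relEnt ν' ν := by
  set Δ := ∫ x, g x ∂ν' - ∫ x, g x ∂ν
  -- `t = Δ / V` maximizes `t * Δ - t ^ 2 * V / 2`
  set t := Δ / V
  have hlog : Real.log (∫ x, Real.exp (t * g x) ∂ν) ≤ t * ∫ x, g x ∂ν + t ^ 2 * V / 2 := by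
    have h := hsub t
    simp only [Real.exp_sub, integral_div, integral_const_mul] at h
    rw [div_le_iff₀ (Real.exp_pos _), ← Real.exp_add] at h
    rw [Real.log_le_iff_le_exp (integral_exp_pos (hexp t)), add_comm]
    exact h
  refine le_trans (ENNReal.ofReal_le_ofReal ?_)
    (integral_sub_log_integral_exp_le_relEnt (hg.const_mul t) (hexp t))
  rw [integral_const_mul]
  have ht : t * V = Δ := div_mul_cancel₀ Δ hV.ne'
  calc Δ ^ 2 / (2 * V) = t * Δ - t ^ 2 * V / 2 := by
        field_simp
        rw [← ht]; ring
    _ ≤ _ := by linarith [hlog]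

end Entropy

def IsLocalOn {S : Type*} {d : ℕ} (Λ : Finset (Fin d → ℤ)) (f : Config S d → ℝ) : Prop :=
  ∀ σ η : Config S d, (∀ i ∈ Λ, σ i = η i) → f σ = f η

section Oscillation
variable {S : Type*} {d : ℕ}

lemma IsLocalOn.mono {Λ Λ' : Finset (Fin d → ℤ)} {f : Config S d → ℝ} (hf : IsLocalOn Λ f)
    (h : Λ ⊆ Λ') : IsLocalOn Λ' f :=
  fun σ η hση => hf σ η fun i hi => hση i (h hi)

lemma IsLocalOn.comp_shift {Λ Λ' : Finset (Fin d → ℤ)} {f : Config S d → ℝ} (hf : IsLocalOn Λ f)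
    {k : Fin d → ℤ} (h : ∀ j ∈ Λ, j - k ∈ Λ') : IsLocalOn Λ' fun σ => f (shift k σ) :=
  fun _ _ hση => hf _ _ fun j hj => hση _ (h j hj)

lemma IsLocalOn.sum {ι : Type*} {Λ : Finset (Fin d → ℤ)} (T : Finset ι)
    {F : ι → Config S d → ℝ} (hF : ∀ k ∈ T, IsLocalOn Λ (F k)) :
    IsLocalOn Λ fun σ => ∑ k ∈ T, F k σ :=
  fun σ η hση => Finset.sum_congr rfl fun k hk => hF k hk σ η hση

lemma le_osc {f : Config S d → ℝ} {i : Fin d → ℤ} {σ η : Config S d}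
    (h : ∀ j, j ≠ i → σ j = η j) : ENNReal.ofReal (f σ - f η) ≤ osc f i :=
  le_iSup_of_le σ (le_iSup_of_le η (le_iSup_of_le h le_rfl))

lemma osc_le {f : Config S d → ℝ} {i : Fin d → ℤ} {c : ℝ≥0∞}
    (h : ∀ σ η : Config S d, (∀ j, j ≠ i → σ j = η j) → ENNReal.ofReal (f σ - f η) ≤ c) :
    osc f i ≤ c :=
  iSup_le fun σ => iSup_le fun η => iSup_le fun hh => h σ η hh

lemma ofReal_abs_sub_le_osc {f : Config S d → ℝ} {i : Fin d → ℤ} {σ η : Config S d}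
    (h : ∀ j, j ≠ i → σ j = η j) : ENNReal.ofReal |f σ - f η| ≤ osc f i := by
  rcases le_total 0 (f σ - f η) with hle | hle
  · rw [abs_of_nonneg hle]
    exact le_osc h
  · rw [abs_of_nonpos hle, neg_sub]
    exact le_osc fun j hj => (h j hj).symm

lemma osc_le_of_abs_le {f : Config S d → ℝ} {M : ℝ} (hf : ∀ σ, |f σ| ≤ M) (i : Fin d → ℤ) :
    osc f i ≤ ENNReal.ofReal (2 * M) := by
  refine osc_le fun σ η _ => ENNReal.ofReal_le_ofReal ?_
  linarith [abs_le.1 (hf σ), abs_le.1 (hf η)]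

lemma IsLocalOn.osc_eq_zero {Λ : Finset (Fin d → ℤ)} {f : Config S d → ℝ} (hf : IsLocalOn Λ f)
    {i : Fin d → ℤ} (hi : i ∉ Λ) : osc f i = 0 :=
  le_antisymm (osc_le fun σ η h => by
    rw [hf σ η fun j hj => h j (ne_of_mem_of_not_mem hj hi), sub_self, ENNReal.ofReal_zero])
    bot_le

lemma osc_add_le (f g : Config S d → ℝ) (i : Fin d → ℤ) :
    osc (fun σ => f σ + g σ) i ≤ osc f i + osc g i := by
  refine osc_le fun σ η h => ?_
  rw [add_sub_add_comm]
  exact ENNReal.ofReal_add_le.trans (add_le_add (le_osc h) (le_osc h))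

lemma osc_sum_le {ι : Type*} (T : Finset ι) (F : ι → Config S d → ℝ) (i : Fin d → ℤ) :
    osc (fun σ => ∑ k ∈ T, F k σ) i ≤ ∑ k ∈ T, osc (F k) i := by
  classical
  induction T using Finset.induction_on with
  | empty => exact osc_le fun σ η _ => by simp
  | insert a T ha ih =>
    simp only [Finset.sum_insert ha]
    exact (osc_add_le _ _ i).trans (add_le_add_right ih _)

lemma osc_const_mul_le (f : Config S d → ℝ) (t : ℝ) (i : Fin d → ℤ) :
    osc (fun σ => t * f σ) i ≤ ENNReal.ofReal |t| * osc f i := by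
  refine osc_le fun σ η h => ?_
  calc ENNReal.ofReal (t * f σ - t * f η)
      ≤ ENNReal.ofReal (|t| * |f σ - f η|) := by
        rw [← mul_sub, ← abs_mul]
        exact ENNReal.ofReal_le_ofReal (le_abs_self _)
    _ ≤ ENNReal.ofReal |t| * osc f i := by
        rw [ENNReal.ofReal_mul (abs_nonneg t)]
        exact mul_le_mul_right (ofReal_abs_sub_le_osc h) _

lemma osc_comp_shift_le (f : Config S d → ℝ) (k i : Fin d → ℤ) :
    osc (fun σ => f (shift k σ)) i ≤ osc f (i + k) :=
  osc_le fun σ η h => le_osc fun j hj => h _ fun hc => hj (by rw [← hc]; abel)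

lemma osc_sum_comp_shift_le (f : Config S d → ℝ) (T : Finset (Fin d → ℤ))
    (i : Fin d → ℤ) :
    osc (fun σ => ∑ k ∈ T, f (shift k σ)) i ≤ ∑' j, osc f j :=
  calc osc (fun σ => ∑ k ∈ T, f (shift k σ)) i
      ≤ ∑ k ∈ T, osc f (i + k) :=
        (osc_sum_le _ _ i).trans (Finset.sum_le_sum fun k _ => osc_comp_shift_le f k i)
    _ = ∑ j ∈ T.image (i + ·), osc f j := (Finset.sum_image fun _ _ _ _ => add_left_cancel).symm
    _ ≤ ∑' j, osc f j := ENNReal.sum_le_tsum _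

lemma IsLocalOn.tsum_osc_le {Λ : Finset (Fin d → ℤ)} {f : Config S d → ℝ} (hf : IsLocalOn Λ f)
    {M : ℝ} (hM : ∀ σ, |f σ| ≤ M) : ∑' j, osc f j ≤ Λ.card * ENNReal.ofReal (2 * M) := by
  rw [tsum_eq_sum fun j hj => hf.osc_eq_zero hj, ← nsmul_eq_mul]
  exact Finset.sum_le_card_nsmul _ _ _ fun j _ => osc_le_of_abs_le hM j

lemma IsLocalOn.tsum_osc_sq_le {Λ : Finset (Fin d → ℤ)} {f : Config S d → ℝ} (hf : IsLocalOn Λ f)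
    {A : ℝ≥0∞} (hA : ∀ i, osc f i ≤ A) : ∑' i, osc f i ^ 2 ≤ Λ.card * A ^ 2 := by
  rw [tsum_eq_sum fun i hi => by rw [hf.osc_eq_zero hi, zero_pow two_ne_zero], ← nsmul_eq_mul]
  exact Finset.sum_le_card_nsmul _ _ _ fun i _ => pow_le_pow_left' (hA i) 2

end Oscillation

section Cube

lemma mem_cube {d n : ℕ} {i : Fin d → ℤ} : i ∈ cube d n ↔ ∀ a, -(n : ℤ) ≤ i a ∧ i a ≤ n := by
  simp [cube, Fintype.mem_piFinset, Finset.mem_Icc]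

lemma sub_mem_cube_add {d n r : ℕ} {j k : Fin d → ℤ} (hj : j ∈ cube d r) (hk : k ∈ cube d n) :
    j - k ∈ cube d (n + r) := by
  rw [mem_cube] at hj hk ⊢
  intro a
  have := hj a
  have := hk a
  simp only [Pi.sub_apply]
  omega

lemma card_cube (d n : ℕ) : (cube d n).card = (2 * n + 1) ^ d := by
  have hIcc : (Finset.Icc (-(n : ℤ)) n).card = 2 * n + 1 := by
    rw [Int.card_Icc]
    omega
  simp [cube, Fintype.card_piFinset, hIcc]

lemma card_cube_pos (d n : ℕ) : 0 < (cube d n).card := by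
  rw [card_cube]
  positivity

lemma card_cube_add_le (d n r : ℕ) :
    (cube d (n + r)).card ≤ (cube d n).card * (cube d r).card := by
  rw [card_cube, card_cube, card_cube, ← mul_pow]
  exact Nat.pow_le_pow_left (by nlinarith) d

lemma exists_subset_cube {d : ℕ} (Λ : Finset (Fin d → ℤ)) : ∃ r, Λ ⊆ cube d r := by
  refine ⟨Λ.sup fun i => Finset.univ.sup fun a => (i a).natAbs, fun i hi => mem_cube.2 fun a => ?_⟩
  have h : (i a).natAbs ≤ Λ.sup fun i => Finset.univ.sup fun a => (i a).natAbs :=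
    (Finset.le_sup (f := fun a => (i a).natAbs) (Finset.mem_univ a)).trans
      (Finset.le_sup (f := fun i => Finset.univ.sup fun a => (i a).natAbs) hi)
  omega

variable {S : Type*} {d : ℕ}

lemma IsLocalOn.sum_comp_shift_cube {f : Config S d → ℝ} {r : ℕ} (hf : IsLocalOn (cube d r) f)
    (n : ℕ) : IsLocalOn (cube d (n + r)) fun σ => ∑ k ∈ cube d n, f (shift k σ) :=
  IsLocalOn.sum _ fun _ hk => hf.comp_shift fun _ hj => sub_mem_cube_add hj hk

lemma IsLocalOn.tsum_osc_sq_sum_comp_shift_cube_le {f : Config S d → ℝ} {M : ℝ} (hM : 0 ≤ M)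
    (hfM : ∀ σ, |f σ| ≤ M) {r : ℕ} (hf : IsLocalOn (cube d r) f) (n : ℕ) :
    ∑' i, osc (fun σ => ∑ k ∈ cube d n, f (shift k σ)) i ^ 2 ≤
      ENNReal.ofReal ((cube d (n + r)).card * (2 * M * (cube d r).card) ^ 2) := by
  have hosc : ∀ i, osc (fun σ => ∑ k ∈ cube d n, f (shift k σ)) i ≤
      ENNReal.ofReal (2 * M * (cube d r).card) := fun i =>
    (osc_sum_comp_shift_le f _ i).trans <| (hf.tsum_osc_le hfM).trans_eq <| by
      rw [ENNReal.ofReal_mul (by positivity : (0 : ℝ) ≤ 2 * M), ENNReal.ofReal_natCast, mul_comm]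
  refine ((hf.sum_comp_shift_cube n).tsum_osc_sq_le hosc).trans_eq ?_
  rw [ENNReal.ofReal_mul (Nat.cast_nonneg _), ENNReal.ofReal_pow (by positivity),
    ENNReal.ofReal_natCast]

end Cube

section Measures
variable {S : Type*} {d : ℕ} [MeasurableSpace S]

lemma measurable_shift (k : Fin d → ℤ) : Measurable (shift (S := S) k) :=
  measurable_pi_lambda _ fun j => measurable_pi_apply (j - k)

lemma measurable_proj (Λ : Finset (Fin d → ℤ)) : Measurable (proj (S := S) Λ) :=
  measurable_pi_lambda _ fun _ => measurable_pi_apply _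

lemma TransInv.integral_comp_shift {ν : Measure (Config S d)} (hν : TransInv ν)
    {f : Config S d → ℝ} (hf : Integrable f ν) (k : Fin d → ℤ) :
    ∫ σ, f (shift k σ) ∂ν = ∫ σ, f σ ∂ν := by
  rw [← integral_map (measurable_shift k).aemeasurable ((hν k).symm ▸ hf.aestronglyMeasurable),
    hν k]

lemma TransInv.integral_sum_comp_shift {ν : Measure (Config S d)} (hν : TransInv ν)
    {f : Config S d → ℝ} (hf : Integrable f ν) (T : Finset (Fin d → ℤ)) :
    ∫ σ, ∑ k ∈ T, f (shift k σ) ∂ν = T.card * ∫ σ, f σ ∂ν := by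
  have hint : ∀ k ∈ T, Integrable (fun σ => f (shift k σ)) ν := fun k _ =>
    ((hν k).symm ▸ hf : Integrable f (ν.map (shift k))).comp_measurable (measurable_shift k)
  rw [integral_finsetSum T hint, Finset.sum_congr rfl fun k _ => hν.integral_comp_shift hf k,
    Finset.sum_const, nsmul_eq_mul]

lemma IsLocalOn.exists_measurable_comp_proj [Nonempty (Config S d)] {Λ : Finset (Fin d → ℤ)}
    {f : Config S d → ℝ} (hf : IsLocalOn Λ f) (hfm : Measurable f) :
    ∃ G : (Λ → S) → ℝ, Measurable G ∧ ∀ σ, G (proj Λ σ) = f σ := by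
  classical
  obtain ⟨σ₀⟩ := ‹Nonempty (Config S d)›
  let extend : (Λ → S) → Config S d := fun y j => if h : j ∈ Λ then y ⟨j, h⟩ else σ₀ j
  have hextend : Measurable extend := by
    refine measurable_pi_lambda _ fun j => ?_
    by_cases hj : j ∈ Λ
    · simpa [extend, hj] using measurable_pi_apply (⟨j, hj⟩ : Λ)
    · simp [extend, hj]
  exact ⟨f ∘ extend, hfm.comp hextend, fun σ => hf _ _ fun j hj => by simp [extend, hj, proj]⟩

lemma GCB.integral_exp_mul_sub_le {C : ℝ} {μ : Measure (Config S d)} (hGCB : GCB C μ)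
    (hC : 0 ≤ C) {Λ : Finset (Fin d → ℤ)} {F : Config S d → ℝ} (hFm : Measurable F)
    (hFb : IsBoundedFn F) (hF : IsLocalOn Λ F) {B : ℝ} (hB : 0 ≤ B)
    (hosc : ∑' i, osc F i ^ 2 ≤ ENNReal.ofReal B) (t : ℝ) :
    ∫ σ, Real.exp (t * F σ - ∫ η, t * F η ∂μ) ∂μ ≤ Real.exp (t ^ 2 * (C * B) / 2) := by
  obtain ⟨M, hM⟩ := hFb
  have hosc_t : ∑' i, osc (fun σ => t * F σ) i ^ 2 ≤ ENNReal.ofReal (t ^ 2 * B) :=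
    calc ∑' i, osc (fun σ => t * F σ) i ^ 2
        ≤ ∑' i, (ENNReal.ofReal |t| * osc F i) ^ 2 :=
          ENNReal.tsum_le_tsum fun i => pow_le_pow_left' (osc_const_mul_le F t i) 2
      _ ≤ ENNReal.ofReal |t| ^ 2 * ENNReal.ofReal B := by
          simp_rw [mul_pow, ENNReal.tsum_mul_left]
          gcongr
      _ = ENNReal.ofReal (t ^ 2 * B) := by
          rw [← ENNReal.ofReal_pow (abs_nonneg t), sq_abs, ENNReal.ofReal_mul (sq_nonneg t)]
  refine (hGCB _ (hFm.const_mul t) ⟨|t| * M, fun σ => ?_⟩ ⟨Λ, fun σ η h => by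
    simp only [hF σ η h]⟩).trans (Real.exp_le_exp.2 ?_)
  · rw [abs_mul]
    exact mul_le_mul_of_nonneg_left (hM σ) (abs_nonneg t)
  · have := ENNReal.toReal_le_of_le_ofReal (by positivity) hosc_t
    nlinarith

lemma GCB.sq_integral_sub_div_le_relEntΛ {C : ℝ} {μ : Measure (Config S d)}
    (hGCB : GCB C μ) (hC : 0 < C) (μ' : Measure (Config S d)) [IsProbabilityMeasure μ]
    [IsProbabilityMeasure μ'] {Λ : Finset (Fin d → ℤ)} {F : Config S d → ℝ}
    (hFm : Measurable F) (hFb : IsBoundedFn F) (hF : IsLocalOn Λ F) {B : ℝ}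
    (hB : 0 < B) (hosc : ∑' i, osc F i ^ 2 ≤ ENNReal.ofReal B) :
    ENNReal.ofReal ((∫ σ, F σ ∂μ' - ∫ σ, F σ ∂μ) ^ 2 / (2 * (C * B))) ≤ relEntΛ Λ μ' μ := by
  have := nonempty_of_isProbabilityMeasure μ
  obtain ⟨M, hM⟩ := hFb
  obtain ⟨G, hGm, hG⟩ := hF.exists_measurable_comp_proj hFm
  have := Measure.isProbabilityMeasure_map (μ := μ) (measurable_proj (S := S) Λ).aemeasurable
  have := Measure.isProbabilityMeasure_map (μ := μ') (measurable_proj (S := S) Λ).aemeasurable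
  have hmap : ∀ (ν : Measure (Config S d)) (φ : ℝ → ℝ), Measurable φ →
      ∫ y, φ (G y) ∂ν.map (proj Λ) = ∫ σ, φ (F σ) ∂ν := fun ν φ hφ => by
    rw [integral_map (f := fun y => φ (G y)) (measurable_proj Λ).aemeasurable
      (hφ.comp hGm).aestronglyMeasurable]
    simp only [hG]
  have hint : ∀ (ν : Measure (Config S d)) (φ : ℝ → ℝ), Measurable φ →
      Integrable (fun σ => φ (F σ)) ν → Integrable (fun y => φ (G y)) (ν.map (proj Λ)) :=
    fun ν φ hφ h => (integrable_map_measure (hφ.comp hGm).aestronglyMeasurable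
      (measurable_proj Λ).aemeasurable).2 (by simpa [Function.comp_def, hG] using h)
  have key := sq_integral_sub_div_le_relEnt (ν' := μ'.map (proj Λ)) (ν := μ.map (proj Λ))
    (g := G) (mul_pos hC hB) (hint μ' id measurable_id (integrable_of_abs_le hFm hM))
    (fun t => hint μ (fun x => Real.exp (t * x)) (by fun_prop)
      (integrable_exp_const_mul_of_abs_le hFm hM t))
    (fun t => by
      rw [hmap μ (fun x => t * x) (by fun_prop)]
      rw [hmap μ (fun x => Real.exp (t * x - ∫ σ, t * F σ ∂μ)) (by fun_prop)]
      exact hGCB.integral_exp_mul_sub_le hC.le hFm ⟨M, hM⟩ hF hB.le hosc t)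
  have hmap_id : ∀ ν : Measure (Config S d), ∫ y, G y ∂ν.map (proj Λ) = ∫ σ, F σ ∂ν :=
    fun ν => hmap ν id measurable_id
  rwa [hmap_id, hmap_id] at key

end Measures

section Density
variable {S : Type*} {d : ℕ} [MeasurableSpace S]

lemma GCB.ofReal_le_relEntΛ_cube_div_card {C : ℝ} {μ μ' : Measure (Config S d)}
    (hGCB : GCB C μ) (hC : 0 < C) [IsProbabilityMeasure μ] [IsProbabilityMeasure μ']
    (hμ : TransInv μ) (hμ' : TransInv μ') {f : Config S d → ℝ} (hfm : Measurable f) {M : ℝ}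
    (hM : 0 < M) (hfM : ∀ σ, |f σ| ≤ M) {r : ℕ} (hf : IsLocalOn (cube d r) f) (n : ℕ) :
    ENNReal.ofReal ((∫ σ, f σ ∂μ' - ∫ σ, f σ ∂μ) ^ 2 /
        (2 * C * (2 * M * (cube d r).card) ^ 2 * (cube d r).card ^ 2)) ≤
      relEntΛ (cube d (n + r)) μ' μ / (cube d (n + r)).card := by
  set Δ := ∫ σ, f σ ∂μ' - ∫ σ, f σ ∂μ
  set K : ℝ := ((cube d r).card : ℝ)
  set Nn : ℝ := ((cube d n).card : ℝ)
  set Nm : ℝ := ((cube d (n + r)).card : ℝ)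
  set a := 2 * M * K
  set F : Config S d → ℝ := fun σ => ∑ k ∈ cube d n, f (shift k σ)
  have hK : 0 < K := Nat.cast_pos.2 (card_cube_pos d r)
  have hNn : 0 < Nn := Nat.cast_pos.2 (card_cube_pos d n)
  have hNm : 0 < Nm := Nat.cast_pos.2 (card_cube_pos d (n + r))
  have ha : 0 < a := by positivity
  have hFm : Measurable F := Finset.measurable_sum _ fun k _ => hfm.comp (measurable_shift k)
  have hFb : IsBoundedFn F := ⟨Nn * M, fun σ =>
    (Finset.abs_sum_le_sum_abs _ _).trans <|
      (Finset.sum_le_card_nsmul _ _ _ fun k _ => hfM _).trans_eq (nsmul_eq_mul _ _)⟩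
  have hosc : ∑' i, osc F i ^ 2 ≤ ENNReal.ofReal (Nm * a ^ 2) :=
    hf.tsum_osc_sq_sum_comp_shift_cube_le hM.le hfM n
  have hΔF : ∫ σ, F σ ∂μ' - ∫ σ, F σ ∂μ = Nn * Δ := by
    rw [hμ'.integral_sum_comp_shift (integrable_of_abs_le hfm hfM),
      hμ.integral_sum_comp_shift (integrable_of_abs_le hfm hfM), mul_sub]
  have hbound := hGCB.sq_integral_sub_div_le_relEntΛ hC μ' hFm hFb (hf.sum_comp_shift_cube n)
    (by positivity) hosc
  rw [hΔF] at hbound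
  rw [ENNReal.le_div_iff_mul_le (.inl (Nat.cast_ne_zero.2 (card_cube_pos d _).ne'))
      (.inl (ENNReal.natCast_ne_top _)), ← ENNReal.ofReal_natCast,
    ← ENNReal.ofReal_mul (by positivity)]
  refine (ENNReal.ofReal_le_ofReal ?_).trans hbound
  have hNmK : Nm ≤ Nn * K := by
    simp only [Nm, Nn, K]
    exact_mod_cast card_cube_add_le d n r
  rw [div_mul_eq_mul_div, div_le_div_iff₀ (by positivity) (by positivity)]
  have : Nm ^ 2 ≤ (Nn * K) ^ 2 := pow_le_pow_left₀ hNm.le hNmK 2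
  have : 0 ≤ Δ ^ 2 * (2 * C * a ^ 2) := by positivity
  nlinarith

end Density

theorem gcb_implies_entDensity_pos_general {S : Type*} {d : ℕ}
    [MeasurableSpace S]
    (hsep : ∀ ν ν' : Measure (Config S d), IsProbabilityMeasure ν → IsProbabilityMeasure ν' →
      (∀ f : Config S d → ℝ, Measurable f → IsBoundedFn f → IsLocalFn f →
        ∫ x, f x ∂ν = ∫ x, f x ∂ν') → ν = ν')
    (μ μ' : Measure (Config S d)) [IsProbabilityMeasure μ] [IsProbabilityMeasure μ']
    (C : ℝ) (hC : 0 < C) (hGCB : GCB C μ)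
    (hμ : TransInv μ) (hμ' : TransInv μ')
    (hne : μ' ≠ μ) :
    0 < entDensity μ' μ := by
  obtain ⟨f, hfm, ⟨M₀, hfM₀⟩, ⟨Λ, hfΛ⟩, hΔ⟩ : ∃ f : Config S d → ℝ, Measurable f ∧
      IsBoundedFn f ∧ IsLocalFn f ∧ ∫ σ, f σ ∂μ' ≠ ∫ σ, f σ ∂μ := by
    by_contra! h
    exact hne (hsep μ' μ inferInstance inferInstance h)
  obtain ⟨M, hM, hfM⟩ : ∃ M, 0 < M ∧ ∀ σ, |f σ| ≤ M :=
    ⟨max M₀ 1, by positivity, fun σ => (hfM₀ σ).trans (le_max_left _ _)⟩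
  obtain ⟨r, hr⟩ := exists_subset_cube Λ
  have hpos : 0 < (∫ σ, f σ ∂μ' - ∫ σ, f σ ∂μ) ^ 2 /
      (2 * C * (2 * M * (cube d r).card) ^ 2 * (cube d r).card ^ 2) := by
    have := card_cube_pos d r
    have := sub_ne_zero.2 hΔ
    positivity
  refine (ENNReal.ofReal_pos.2 hpos).trans_le (le_liminf_of_le (by isBoundedDefault) ?_)
  refine eventually_atTop.2 ⟨r, fun m hm => ?_⟩
  obtain ⟨n, rfl⟩ := Nat.exists_eq_add_of_le' hm
  exact hGCB.ofReal_le_relEntΛ_cube_div_card hC hμ hμ' hfm hM hfM (IsLocalOn.mono hfΛ hr) n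

theorem gcb_implies_entDensity_pos {S : Type*} {d : ℕ}
    [MeasurableSpace S] [MetricSpace S] [BorelSpace S]
    (hdiam : Bornology.IsBounded (Set.univ : Set S))
    (hsep : ∀ ν ν' : Measure (Config S d), IsProbabilityMeasure ν → IsProbabilityMeasure ν' →
      (∀ f : Config S d → ℝ, Measurable f → IsBoundedFn f → IsLocalFn f →
        ∫ x, f x ∂ν = ∫ x, f x ∂ν') → ν = ν')
    (μ μ' : Measure (Config S d)) [IsProbabilityMeasure μ] [IsProbabilityMeasure μ']
    (C : ℝ) (hC : 0 < C) (hGCB : GCB C μ)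
    (hμ : TransInv μ) (hμ' : TransInv μ')
    (hne : μ' ≠ μ) :
    0 < entDensity μ' μ :=
  gcb_implies_entDensity_pos_general hsep μ μ' C hC hGCB hμ hμ' hne
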